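/- For any Boolean network f of dimension n and any binary configurations x, y ∈ 𝔹^n, if y is reachable from x under the fully asynchronous semantics (x →*_{a1,f} y) then y is reachable from x under the most permissive semantics (x →*_{mp,f} y). -/
import Mathlib


inductive PState : Type
  | zero | up | down | one
deriving DecidableEq

def PState.ofBool : Bool → PState
  | false => .zero
  | true  => .one

def PState.isBool (p : PState) : Prop := p = .zero ∨ p = .one

abbrev BN (n : ℕ) := (Fin n → Bool) → Fin n → Bool

def gamma {n : ℕ} (x : Fin n → PState) : Set (Fin n → Bool) :=
  {b | ∀ i (v : Bool), x i = PState.ofBool v → b i = v}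

def mpStep {n : ℕ} (f : BN n) (x y : Fin n → PState) : Prop :=
  ∃ i : Fin n, x i ≠ y i ∧ (∀ j, j ≠ i → x j = y j) ∧
    ((y i = .up ∧ x i ≠ .one ∧ ∃ z ∈ gamma x, f z i = true) ∨
     (y i = .one ∧ x i = .up) ∨
     (y i = .down ∧ x i ≠ .zero ∧ ∃ z ∈ gamma x, f z i = false) ∨
     (y i = .zero ∧ x i = .down))

def mpReachP {n : ℕ} (f : BN n) : (Fin n → PState) → (Fin n → PState) → Prop :=
  Relation.ReflTransGen (mpStep f)

def embed {n : ℕ} (x : Fin n → Bool) : Fin n → PState := fun i => PState.ofBool (x i)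

def mpReach {n : ℕ} (f : BN n) (x : Fin n → Bool) : Set (Fin n → Bool) :=
  {y | mpReachP f (embed x) (embed y)}

def cubeSet {n : ℕ} (h : Fin n → Option Bool) : Set (Fin n → Bool) :=
  {z | ∀ i b, h i = some b → z i = b}

def smaller {n : ℕ} (h h' : Fin n → Option Bool) : Prop :=
  ∀ i b, h' i = some b → h i = some b

def kClosed {n : ℕ} (f : BN n) (K : Finset (Fin n)) (h : Fin n → Option Bool) : Prop :=
  ∀ z ∈ cubeSet h, ∀ i ∈ K, h i = none ∨ h i = some (f z i)

def closedBy {n : ℕ} (f : BN n) (h : Fin n → Option Bool) : Prop :=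
  ∀ z ∈ cubeSet h, f z ∈ cubeSet h

def smallestClosed {n : ℕ} (f : BN n) (x : Fin n → Bool) (h : Fin n → Option Bool) : Prop :=
  x ∈ cubeSet h ∧ closedBy f h ∧
    ∀ h', x ∈ cubeSet h' → closedBy f h' → smaller h h'

def minClosed {n : ℕ} (f : BN n) (h : Fin n → Option Bool) : Prop :=
  closedBy f h ∧ ∀ h', closedBy f h' → smaller h' h → h' = h

def faStep {n : ℕ} (f : BN n) (x y : Fin n → Bool) : Prop :=
  ∃ i : Fin n, x i ≠ y i ∧ (∀ j, j ≠ i → x j = y j) ∧ y i = f x i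

def aStep {n : ℕ} (f : BN n) (x y : Fin n → Bool) : Prop :=
  x ≠ y ∧ ∀ i, x i ≠ y i → y i = f x i

def mnStep {n m : ℕ} (F : (Fin n → Fin (m+1)) → Fin n → ℤ)
    (x y : Fin n → Fin (m+1)) : Prop :=
  x ≠ y ∧ ∀ i, x i ≠ y i → ((y i : ℤ) = (x i : ℤ) + F x i)

def beta {n m : ℕ} (x : Fin n → Fin (m+1)) : Set (Fin n → Bool) :=
  {b | ∀ i, ((x i : ℕ) = 0 → b i = false) ∧ ((x i : ℕ) = m → b i = true)}

def refines {n m : ℕ} (F : (Fin n → Fin (m+1)) → Fin n → ℤ) (f : BN n) : Prop :=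
  ∀ x i, (F x i > 0 → ∃ b ∈ beta x, f b i = true) ∧
         (F x i < 0 → ∃ b ∈ beta x, f b i = false)

def alpha {n m : ℕ} (x : Fin n → Fin (m+1)) : Set (Fin n → PState) :=
  {p | ∀ i, ((x i : ℕ) = 0 ↔ p i = .zero) ∧ ((x i : ℕ) = m ↔ p i = .one)}

def bdStep {n : ℕ} (f : BN n) (L : Finset (Fin n)) (a b : Fin n → PState) : Prop :=
  mpStep f a b ∧ ∃ j, a j ≠ b j ∧ j ∉ L ∧ (a j).isBool ∧ ¬ (b j).isBool

def exhaustive {n : ℕ} (f : BN n) (x : Fin n → Bool) (L : Finset (Fin n))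
    (zhat : Fin n → PState) : Prop :=
  Relation.ReflTransGen (bdStep f L) (embed x) zhat ∧ ∀ z', ¬ bdStep f L zhat z'


lemma self_mem_gamma {n : ℕ} (x : Fin n → Bool) : x ∈ gamma (embed x) := by
  intro i v hv
  cases hx : x i <;> cases v <;> simp_all [embed, PState.ofBool]

lemma faStep_mp {n : ℕ} (f : BN n) (x y : Fin n → Bool) (h : faStep f x y) :
    mpReachP f (embed x) (embed y) := by
  obtain ⟨i, hne, hagree, hfy⟩ := h
  have hgamm := self_mem_gamma x
  cases hxi : x i <;> cases hyi : y i <;> simp [hxi, hyi] at hne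
  · -- x i = false, y i = true
    have hf : f x i = true := by rw [← hfy, hyi]
    set mid := Function.update (embed x) i PState.up with hmid
    have s1 : mpStep f (embed x) mid := by
      refine ⟨i, ?_, ?_, Or.inl ⟨?_, ?_, x, hgamm, hf⟩⟩
      · simp [hmid, embed, hxi, PState.ofBool]
      · intro j hj; simp [hmid, Function.update_of_ne hj]
      · simp [hmid]
      · simp [embed, hxi, PState.ofBool]
    have s2 : mpStep f mid (embed y) := by
      refine ⟨i, ?_, ?_, Or.inr (Or.inl ⟨?_, ?_⟩)⟩
      · simp [hmid, embed, hyi, PState.ofBool]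
      · intro j hj
        simp [hmid, Function.update_of_ne hj, embed, hagree j hj]
      · simp [embed, hyi, PState.ofBool]
      · simp [hmid]
    exact Relation.ReflTransGen.head s1 (Relation.ReflTransGen.single s2)
  · -- x i = true, y i = false
    have hf : f x i = false := by rw [← hfy, hyi]
    set mid := Function.update (embed x) i PState.down with hmid
    have s1 : mpStep f (embed x) mid := by
      refine ⟨i, ?_, ?_, Or.inr (Or.inr (Or.inl ⟨?_, ?_, x, hgamm, hf⟩))⟩
      · simp [hmid, embed, hxi, PState.ofBool]
      · intro j hj; simp [hmid, Function.update_of_ne hj]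
      · simp [hmid]
      · simp [embed, hxi, PState.ofBool]
    have s2 : mpStep f mid (embed y) := by
      refine ⟨i, ?_, ?_, Or.inr (Or.inr (Or.inr ⟨?_, ?_⟩))⟩
      · simp [hmid, embed, hyi, PState.ofBool]
      · intro j hj
        simp [hmid, Function.update_of_ne hj, embed, hagree j hj]
      · simp [embed, hyi, PState.ofBool]
      · simp [hmid]
    exact Relation.ReflTransGen.head s1 (Relation.ReflTransGen.single s2)

theorem stmt6 {n : ℕ} (f : BN n) (x y : Fin n → Bool)
    (h : Relation.ReflTransGen (faStep f) x y) :
    mpReachP f (embed x) (embed y) := by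
  induction h with
  | refl => exact Relation.ReflTransGen.refl
  | tail _ hstep ih => exact ih.trans (faStep_mp f _ _ hstep)
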